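/- arXiv:1912.06428 — 2 statements merged into one kernel-verified Lean document; each statement's English description precedes it below -/
import Mathlib

section
/- Fix n ≥ 1 and let Q(x) = x². Let F be the distribution over valuation curves supported on V^{(1)}, …, V^{(n)}, where V^{(i)}(x) = min( 2^{i+1}·x, 2^{2i+1} ) and Pr[V = V^{(i)}] = 4^{−i}/β with β = Σ_{j=1}^n 4^{−j}. Then: (i) the uncapped posted-price mechanism at price 1 has expected welfare E[ V(d_V(1)) − Q(d_V(1)) ] = n/β ≥ 3n; and (ii) for every integer C' ≥ 1, the safe-price auction satisfies W(M(C')) ≤ 20. Hence no safe-price auction approximates the optimal cap-and-price welfare within a factor better than Ω(n) on this instance. -/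
open MeasureTheory ProbabilityTheory

noncomputable section

/-- The marginal value of the `j`-th license under the curve `V`. -/
def marg (V : ℕ → ℝ) (j : ℕ) : ℝ := V j - V (j - 1)

/-- A valuation curve: `V 0 = 0`, nondecreasing, nonincreasing marginal values,
and only finitely many nonzero marginal values. -/
def IsValuation (V : ℕ → ℝ) : Prop :=
  V 0 = 0 ∧ Monotone V ∧ (∀ j : ℕ, 1 ≤ j → marg V (j + 1) ≤ marg V j) ∧
    ∃ N : ℕ, ∀ j : ℕ, N ≤ j → marg V j = 0

/-- A social cost function: `Q 0 = 0`, nondecreasing, and (discretely) convex. -/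
def IsCost (Q : ℕ → ℝ) : Prop :=
  Q 0 = 0 ∧ Monotone Q ∧ ∀ x : ℕ, 1 ≤ x → Q x - Q (x - 1) ≤ Q (x + 1) - Q x

/-- The demand of a valuation curve at price `p`:
`sup { j ≥ 1 : marg V j ≥ p } ∈ ℕ ∪ {∞}` (with `sup ∅ = 0`). -/
def dem (V : ℕ → ℝ) (p : ℝ) : ℕ∞ :=
  sSup {j : ℕ∞ | ∃ k : ℕ, j = (k : ℕ∞) ∧ 1 ≤ k ∧ p ≤ marg V k}

/-- Number of licenses sold to curve `V` under cap `C` (possibly `∞`) and price floor `p`. -/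
def sold (C : ℕ∞) (p : ℝ) (V : ℕ → ℝ) : ℕ := (min C (dem V p)).toNat

/-- The safe price for cap `C`: the average social cost `Q C / C` per license. -/
def safeP (Q : ℕ → ℝ) (C : ℕ) : ℝ := Q C / C

/-- Truth-telling expected welfare of the no-ceiling cap-and-price auction `M(C,p)`
for a distribution `F` over (combined) valuation curves. -/
def Wfl (F : Measure (ℕ → ℝ)) (Q : ℕ → ℝ) (C : ℕ∞) (p : ℝ) : ℝ :=
  ∫ V, (V (sold C p V) - Q (sold C p V)) ∂F

/-- Number of licenses sold under cap `C`, price floor `p`, and price ceiling `pbar`. -/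
def xceil (C : ℕ) (p pbar : ℝ) (V : ℕ → ℝ) : ℕ :=
  if (C : ℕ∞) ≤ dem V pbar then (dem V pbar).toNat else sold (C : ℕ∞) p V

/-- Truth-telling expected welfare of the cap-and-price auction `M(C,p,pbar)`. -/
def Wceil (F : Measure (ℕ → ℝ)) (Q : ℕ → ℝ) (C : ℕ) (p pbar : ℝ) : ℝ :=
  ∫ V, (V (xceil C p pbar V) - Q (xceil C p pbar V)) ∂F

/-- The combined valuation curve of a profile of valuation curves. -/
def comb {n : ℕ} (Vp : Fin n → ℕ → ℝ) (x : ℕ) : ℝ :=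
  sSup {s : ℝ | ∃ y : Fin n → ℕ, (∑ i, y i) = x ∧ s = ∑ i, Vp i (y i)}

open Classical in
/-- Product of a family of probability measures (0 if the family fails to consist
of probability measures). -/
def piProb {ι : Type*} [Fintype ι] {α : ι → Type*} [∀ i, MeasurableSpace (α i)]
    (μ : ∀ i, Measure (α i)) : Measure (∀ i, α i) :=
  if h : ∀ i, IsProbabilityMeasure (μ i) then
    haveI := h
    Measure.pi μ
  else 0

/-- Truth-telling expected welfare of `M(C,p)` for independent firms with
valuation distributions `F i`, computed via the combined valuation curve. -/
def Wcomb {n : ℕ} (F : Fin n → Measure (ℕ → ℝ)) (Q : ℕ → ℝ) (C : ℕ∞) (p : ℝ) : ℝ :=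
  ∫ Vp, (comb Vp (sold C p (comb Vp)) - Q (sold C p (comb Vp))) ∂(piProb F)

/-- Truth-telling expected welfare of `M(C,p,pbar)` for independent firms. -/
def WceilComb {n : ℕ} (F : Fin n → Measure (ℕ → ℝ)) (Q : ℕ → ℝ) (C : ℕ) (p pbar : ℝ) : ℝ :=
  ∫ Vp, (comb Vp (xceil C p pbar (comb Vp)) - Q (xceil C p pbar (comb Vp))) ∂(piProb F)

/-- `W^{(1)}`: the expected optimal welfare from allocating licenses to a single firm. -/
def W1 {n : ℕ} (F : Fin n → Measure (ℕ → ℝ)) (Q : ℕ → ℝ) : ℝ :=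
  ∫ Vp, sSup {w : ℝ | ∃ (i : Fin n) (x : ℕ), w = Vp i x - Q x} ∂(piProb F)

/-- The per-license price in the uniform-price auction with cap `C` and floor `pf`,
given a bid profile `b`. -/
def priceOf {n : ℕ} (C : ℕ) (pf : ℝ) (b : Fin n → ℕ → ℝ) : ℝ :=
  if (∑ i, dem (b i) pf) < (C : ℕ∞) then pf else comb b C - comb b (C - 1)

/-- A (measurable) tie-breaking allocation rule for the uniform-price auction with
cap `C` and price floor `pf`. -/
def IsAllocRule {n : ℕ} (C : ℕ) (pf : ℝ) (alloc : (Fin n → ℕ → ℝ) → Fin n → ℕ) : Prop :=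
  Measurable alloc ∧
    ∀ b : Fin n → ℕ → ℝ, (∀ i, IsValuation (b i)) →
      (((∑ i, dem (b i) pf) < (C : ℕ∞)) → ∀ i, alloc b i = (dem (b i) pf).toNat) ∧
      (((C : ℕ∞) ≤ ∑ i, dem (b i) pf) →
        (∑ i, alloc b i) = C ∧
          ∀ y : Fin n → ℕ, (∑ i, y i) = C → (∑ i, b i (y i)) ≤ ∑ i, b i (alloc b i))

/-- The strategy `σi` never overbids: with probability one the bid is a valuation
curve pointwise below the true valuation. -/
def NoOverbid (σi : Kernel (ℕ → ℝ) (ℕ → ℝ)) : Prop :=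
  ∀ V : ℕ → ℝ, IsValuation V → σi V {B | IsValuation B ∧ ∀ x, B x ≤ V x} = 1

/-- Expected welfare when the firms play the (randomized) strategy profile `σ`. -/
def EqWelfare {n : ℕ} (F : Fin n → Measure (ℕ → ℝ)) (σ : Fin n → Kernel (ℕ → ℝ) (ℕ → ℝ))
    (alloc : (Fin n → ℕ → ℝ) → Fin n → ℕ) (Q : ℕ → ℝ) : ℝ :=
  ∫ Vp, (∫ b, ((∑ i, Vp i (alloc b i)) - Q (∑ i, alloc b i))
      ∂(piProb fun j => σ j (Vp j))) ∂(piProb F)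

/-- Expected utility of firm `i` with valuation `Vi` when every firm plays `σ`. -/
def EUeq {n : ℕ} (F : Fin n → Measure (ℕ → ℝ)) (σ : Fin n → Kernel (ℕ → ℝ) (ℕ → ℝ))
    (alloc : (Fin n → ℕ → ℝ) → Fin n → ℕ) (C : ℕ) (pf : ℝ) (i : Fin n) (Vi : ℕ → ℝ) : ℝ :=
  ∫ Vp, (∫ b, (Vi (alloc b i) - priceOf C pf b * (alloc b i : ℝ))
      ∂(piProb fun j => σ j (Function.update Vp i Vi j))) ∂(piProb F)

/-- Expected utility of firm `i` with valuation `Vi` deviating to the fixed bid `Bt`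
while the others play `σ`. -/
def EUdev {n : ℕ} (F : Fin n → Measure (ℕ → ℝ)) (σ : Fin n → Kernel (ℕ → ℝ) (ℕ → ℝ))
    (alloc : (Fin n → ℕ → ℝ) → Fin n → ℕ) (C : ℕ) (pf : ℝ) (i : Fin n) (Vi Bt : ℕ → ℝ) : ℝ :=
  ∫ Vp, (∫ b, (Vi (alloc b i) - priceOf C pf b * (alloc b i : ℝ))
      ∂(piProb fun j => if j = i then Measure.dirac Bt else σ j (Vp j))) ∂(piProb F)

/-- Bayes–Nash equilibrium of the uniform-price auction with cap `C` and floor `pf`. -/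
def IsBNE {n : ℕ} (F : Fin n → Measure (ℕ → ℝ)) (σ : Fin n → Kernel (ℕ → ℝ) (ℕ → ℝ))
    (alloc : (Fin n → ℕ → ℝ) → Fin n → ℕ) (C : ℕ) (pf : ℝ) : Prop :=
  ∀ (i : Fin n) (Vi : ℕ → ℝ), IsValuation Vi → ∀ Bt : ℕ → ℝ, IsValuation Bt →
    EUdev F σ alloc C pf i Vi Bt ≤ EUeq F σ alloc C pf i Vi

/-- `θ_V = min( d_V(p), d_V(P(C)) )`, as a natural number. -/
def thetaN (Q : ℕ → ℝ) (C : ℕ) (p : ℝ) (V : ℕ → ℝ) : ℕ :=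
  (min (dem V p) (dem V (safeP Q C))).toNat

/-- The `i`-th valuation curve of the hard instance: `min(2^{i+1}·x, 2^{2i+1})`. -/
def Vex (i : ℕ) : ℕ → ℝ := fun x => min ((2 : ℝ) ^ (i + 1) * (x : ℝ)) ((2 : ℝ) ^ (2 * i + 1))

/-- The normalization constant `β = Σ_{j=1}^n 4^{−j}`. -/
def betaN (n : ℕ) : ℝ := ∑ j ∈ Finset.Icc 1 n, ((4 : ℝ)⁻¹) ^ j

/-- The social cost `Q(x) = x²`. -/
def Qsq : ℕ → ℝ := fun x => (x : ℝ) ^ 2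

/-!
`V⁽ⁱ⁾` has marginal value `2^{i+1}` on its first `2^i` units and `0` afterwards, so at any price in
`(0, 2^{i+1}]` it demands exactly `2^i` units. At price `1` this yields welfare
`2^{2i+1} - 4^i = 4^i`, i.e. `1/β` per curve after weighting.

Since `Q(x) = x²`, the safe price for cap `C` is `C` itself. Weighted by `4^{-i}`, the welfare of
`V⁽ⁱ⁾` is at most `1` for every allocation (AM-GM: `2^{i+1} m - m² ≤ 4^i`), at most `2C/2^i` when
at most `C` units are sold, and `0` when `2^{i+1} < C`. The curves with `C ≤ 2^i` form a geometric
series of total at most `4`, and a single `i` has `2^i < C ≤ 2^{i+1}`, so the weighted sum is at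
most `5`; dividing by `β ≥ 1/4` gives `20`.
-/

lemma sold_le_cap (C : ℕ) (p : ℝ) (V : ℕ → ℝ) : sold C p V ≤ C :=
  ENat.toNat_le_of_le_natCast (min_le_left _ _)

lemma sold_of_dem_eq_zero {C : ℕ∞} {p : ℝ} {V : ℕ → ℝ} (h : dem V p = 0) : sold C p V = 0 := by
  simp [sold, h]

lemma sum_mul_inv_two_pow_le_two {C : ℕ} {S : Finset ℕ} (hS : ∀ i ∈ S, C ≤ 2 ^ i) :
    ∑ i ∈ S, (C : ℝ) * (1 / 2) ^ i ≤ 2 := by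
  set c := Nat.clog 2 C
  have hsub : S ⊆ Finset.Ico c (S.sup id + 1) := fun i hi =>
    Finset.mem_Ico.2 ⟨(Nat.clog_le_iff_le_pow one_lt_two).2 (hS i hi),
      Nat.lt_succ_of_le (Finset.le_sup (f := id) hi)⟩
  have hC : (C : ℝ) * (1 / 2) ^ c ≤ 1 := by
    rw [one_div_pow, mul_one_div, div_le_one (by positivity)]
    exact_mod_cast Nat.le_pow_clog one_lt_two C
  calc ∑ i ∈ S, (C : ℝ) * (1 / 2) ^ i
      ≤ (C : ℝ) * ∑ i ∈ Finset.Ico c (S.sup id + 1), (1 / 2 : ℝ) ^ i := by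
        rw [Finset.mul_sum]
        exact Finset.sum_le_sum_of_subset_of_nonneg hsub fun _ _ _ => by positivity
    _ ≤ (C : ℝ) * ((1 / 2) ^ c / (1 - 1 / 2)) := by
        gcongr
        exact geom_sum_Ico_le_of_lt_one (by norm_num) (by norm_num)
    _ = 2 * ((C : ℝ) * (1 / 2) ^ c) := by ring
    _ ≤ 2 := by linarith

lemma card_filter_dyadic_le_one (C : ℕ) (S : Finset ℕ) :
    (S.filter fun i => ¬C ≤ 2 ^ i ∧ C ≤ 2 ^ (i + 1)).card ≤ 1 := by
  refine Finset.card_le_one.2 fun i hi j hj => ?_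
  simp only [Finset.mem_filter] at hi hj
  by_contra hne
  rcases Nat.lt_or_gt_of_ne hne with h | h <;>
  · have := Nat.pow_le_pow_right two_pos h
    omega

lemma safeP_Qsq (C : ℕ) : safeP Qsq C = C := by
  simp only [safeP, Qsq, sq, mul_self_div_self]

lemma one_fourth_le_betaN {n : ℕ} (hn : 1 ≤ n) : 1 / 4 ≤ betaN n := by
  calc (1 / 4 : ℝ) = (4⁻¹) ^ 1 := by norm_num
    _ ≤ betaN n := Finset.single_le_sum (fun j _ => by positivity) (Finset.mem_Icc.2 ⟨le_rfl, hn⟩)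

lemma betaN_le_one_third (n : ℕ) : betaN n ≤ 1 / 3 := by
  calc betaN n = ∑ j ∈ Finset.Ico 1 (n + 1), ((4 : ℝ)⁻¹) ^ j := rfl
    _ ≤ (4⁻¹) ^ 1 / (1 - 4⁻¹) := geom_sum_Ico_le_of_lt_one (by norm_num) (by norm_num)
    _ = 1 / 3 := by norm_num

lemma four_pow_eq_sq (i : ℕ) : (4 : ℝ) ^ i = (2 ^ i) ^ 2 := by
  rw [← pow_mul, mul_comm, pow_mul]
  norm_num

section Vex

variable (i : ℕ)

lemma Vex_le_mul (x : ℕ) : Vex i x ≤ 2 ^ (i + 1) * x := min_le_left _ _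

lemma Vex_of_le_two_pow {x : ℕ} (hx : x ≤ 2 ^ i) : Vex i x = 2 ^ (i + 1) * x := by
  refine min_eq_left ?_
  have : (x : ℝ) ≤ 2 ^ i := by exact_mod_cast hx
  calc (2 : ℝ) ^ (i + 1) * x ≤ 2 ^ (i + 1) * 2 ^ i := by gcongr
    _ = 2 ^ (2 * i + 1) := by ring

lemma Vex_of_two_pow_le {x : ℕ} (hx : 2 ^ i ≤ x) : Vex i x = 2 ^ (2 * i + 1) := by
  refine min_eq_right ?_
  have : (2 : ℝ) ^ i ≤ x := by exact_mod_cast hx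
  calc (2 : ℝ) ^ (2 * i + 1) = 2 ^ (i + 1) * 2 ^ i := by ring
    _ ≤ 2 ^ (i + 1) * x := by gcongr

lemma marg_Vex_of_le_two_pow {k : ℕ} (hk : 1 ≤ k) (hk' : k ≤ 2 ^ i) :
    marg (Vex i) k = 2 ^ (i + 1) := by
  rw [marg, Vex_of_le_two_pow i hk', Vex_of_le_two_pow i (k.sub_le 1 |>.trans hk'),
    Nat.cast_sub hk]
  ring

lemma marg_Vex_of_two_pow_lt {k : ℕ} (hk : 2 ^ i < k) : marg (Vex i) k = 0 := by
  rw [marg, Vex_of_two_pow_le i hk.le, Vex_of_two_pow_le i (by omega), sub_self]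

lemma dem_Vex {p : ℝ} (hp : 0 < p) (hp' : p ≤ 2 ^ (i + 1)) : dem (Vex i) p = (2 ^ i : ℕ) := by
  refine le_antisymm (sSup_le ?_) (le_sSup ⟨2 ^ i, rfl, Nat.one_le_two_pow, ?_⟩)
  · rintro _ ⟨k, rfl, -, hpk⟩
    by_contra hk
    rw [marg_Vex_of_two_pow_lt i (by exact_mod_cast not_le.1 hk)] at hpk
    linarith
  · rwa [marg_Vex_of_le_two_pow i Nat.one_le_two_pow le_rfl]

lemma dem_Vex_eq_zero {p : ℝ} (hp : 2 ^ (i + 1) < p) : dem (Vex i) p = 0 := by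
  refine sSup_eq_bot.2 ?_
  rintro _ ⟨k, rfl, hk, hpk⟩
  rcases le_or_gt k (2 ^ i) with hk' | hk'
  · rw [marg_Vex_of_le_two_pow i hk hk'] at hpk
    linarith
  · rw [marg_Vex_of_two_pow_lt i hk'] at hpk
    linarith [pow_pos (two_pos : (0 : ℝ) < 2) (i + 1)]

lemma Vex_zero : Vex i 0 = 0 := by
  simp [Vex_of_le_two_pow i (Nat.zero_le _)]

lemma Vex_sub_Qsq_two_pow : Vex i (2 ^ i) - Qsq (2 ^ i) = 4 ^ i := by
  rw [Vex_of_two_pow_le i le_rfl, Qsq, four_pow_eq_sq]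
  push_cast
  ring

lemma Vex_sub_Qsq_le (m : ℕ) : Vex i m - Qsq m ≤ 4 ^ i := by
  have := Vex_le_mul i m
  rw [Qsq, four_pow_eq_sq]
  nlinarith [sq_nonneg ((2 : ℝ) ^ i - m), pow_succ (2 : ℝ) i]

end Vex

lemma inv_four_pow_mul_welfare_at_one (i : ℕ) :
    (4 : ℝ)⁻¹ ^ i * (Vex i ((dem (Vex i) 1).toNat) - Qsq ((dem (Vex i) 1).toNat)) = 1 := by
  rw [dem_Vex i one_pos (one_le_pow₀ one_le_two), ENat.toNat_natCast, Vex_sub_Qsq_two_pow,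
    ← mul_pow, inv_mul_cancel₀ four_ne_zero, one_pow]

lemma inv_four_pow_mul_welfare_le_one (i m : ℕ) : (4 : ℝ)⁻¹ ^ i * (Vex i m - Qsq m) ≤ 1 := by
  calc (4 : ℝ)⁻¹ ^ i * (Vex i m - Qsq m) ≤ 4⁻¹ ^ i * 4 ^ i := by
        gcongr
        exact Vex_sub_Qsq_le i m
    _ = 1 := by rw [← mul_pow, inv_mul_cancel₀ four_ne_zero, one_pow]

lemma inv_four_pow_mul_welfare_le_of_le {i m C : ℕ} (hm : m ≤ C) :
    (4 : ℝ)⁻¹ ^ i * (Vex i m - Qsq m) ≤ 2 * (C * (1 / 2) ^ i) := by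
  have hmC : (m : ℝ) ≤ C := by exact_mod_cast hm
  calc (4 : ℝ)⁻¹ ^ i * (Vex i m - Qsq m) ≤ 4⁻¹ ^ i * (2 ^ (i + 1) * C) := by
        gcongr
        have hQ : 0 ≤ Qsq m := sq_nonneg _
        linarith [Vex_le_mul i m, (by gcongr : (2 : ℝ) ^ (i + 1) * m ≤ 2 ^ (i + 1) * C)]
    _ = 2 * (C * (1 / 2) ^ i) := by
        rw [inv_pow, four_pow_eq_sq, one_div_pow]
        field_simp
        ring

lemma sum_inv_four_pow_mul_safe_welfare_le (n C : ℕ) :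
    ∑ i ∈ Finset.Icc 1 n, (4 : ℝ)⁻¹ ^ i *
      (Vex i (sold C C (Vex i)) - Qsq (sold C C (Vex i))) ≤ 5 := by
  rw [← Finset.sum_filter_add_sum_filter_not _ fun i => C ≤ 2 ^ i]
  have hlow : ∑ i ∈ (Finset.Icc 1 n).filter (fun i => C ≤ 2 ^ i), (4 : ℝ)⁻¹ ^ i *
      (Vex i (sold C C (Vex i)) - Qsq (sold C C (Vex i))) ≤ 4 :=
    calc _ ≤ ∑ i ∈ (Finset.Icc 1 n).filter (fun i => C ≤ 2 ^ i), 2 * ((C : ℝ) * (1 / 2) ^ i) :=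
          Finset.sum_le_sum fun i _ => inv_four_pow_mul_welfare_le_of_le (sold_le_cap _ _ _)
      _ ≤ 2 * 2 := by
          rw [← Finset.mul_sum]
          gcongr
          exact sum_mul_inv_two_pow_le_two fun i hi => (Finset.mem_filter.1 hi).2
      _ = 4 := by norm_num
  have hhigh : ∑ i ∈ (Finset.Icc 1 n).filter (fun i => ¬C ≤ 2 ^ i), (4 : ℝ)⁻¹ ^ i *
      (Vex i (sold C C (Vex i)) - Qsq (sold C C (Vex i))) ≤ 1 :=
    calc _ ≤ ∑ i ∈ (Finset.Icc 1 n).filter (fun i => ¬C ≤ 2 ^ i),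
          if C ≤ 2 ^ (i + 1) then (1 : ℝ) else 0 := by
          refine Finset.sum_le_sum fun i _ => ?_
          split_ifs with h
          · exact inv_four_pow_mul_welfare_le_one i _
          · have hlt : (2 : ℝ) ^ (i + 1) < C := by exact_mod_cast not_le.1 h
            rw [sold_of_dem_eq_zero (dem_Vex_eq_zero i hlt), Vex_zero, Qsq]
            simp
      _ ≤ 1 := by
          rw [Finset.sum_boole, Finset.filter_filter]
          exact_mod_cast card_filter_dyadic_le_one C _
  linarith

/-- on the single-firm instance with `Q(x) = x²` and valuation `V⁽ⁱ⁾`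
with probability `4^{−i}/β`: (i) the uncapped posted-price mechanism at price 1 has
expected welfare `n/β ≥ 3n`; (ii) every safe-price auction has welfare at most 20. -/
theorem stmt16 (n : ℕ) (hn : 1 ≤ n) :
    ((∑ i ∈ Finset.Icc 1 n, (((4 : ℝ)⁻¹) ^ i / betaN n) *
        (Vex i ((dem (Vex i) 1).toNat) - Qsq ((dem (Vex i) 1).toNat)) = (n : ℝ) / betaN n) ∧
      3 * (n : ℝ) ≤ (n : ℝ) / betaN n) ∧
    ∀ C' : ℕ, 1 ≤ C' →
      (∑ i ∈ Finset.Icc 1 n, (((4 : ℝ)⁻¹) ^ i / betaN n) *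
        (Vex i (sold (C' : ℕ∞) (safeP Qsq C') (Vex i)) -
          Qsq (sold (C' : ℕ∞) (safeP Qsq C') (Vex i)))) ≤ 20 := by
  have hβ : 0 < betaN n := by linarith [one_fourth_le_betaN hn]
  simp only [div_mul_eq_mul_div, ← Finset.sum_div, safeP_Qsq]
  refine ⟨⟨?_, ?_⟩, fun C _ => ?_⟩
  · simp only [inv_four_pow_mul_welfare_at_one, Finset.sum_const, Nat.card_Icc, nsmul_eq_mul,
      mul_one, Nat.add_sub_cancel]
  · rw [le_div_iff₀ hβ]
    nlinarith [betaN_le_one_third n]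
  · rw [div_le_iff₀ hβ]
    linarith [sum_inv_four_pow_mul_safe_welfare_le n C, one_fourth_le_betaN hn]

end
end

section
/- Let C ≥ 1 be an integer, set P(C) = Q(C)/C, and let V_1, …, V_n and B_1, …, B_n be valuation curves with B_i(x) ≤ V_i(x) for all i and all x (no overbidding). Suppose x_1, …, x_n ∈ ℕ satisfy Σ_i x_i ≤ C and every awarded marginal bid is at least the safe price, i.e., B_i(j) − B_i(j−1) ≥ P(C) for every i and every 1 ≤ j ≤ x_i. Then Σ_i V_i(x_i) − Q(Σ_i x_i) ≥ 0. In words: in a safe-price auction, any outcome reachable under no-overbidding bids has nonnegative welfare. -/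
open MeasureTheory ProbabilityTheory

noncomputable section

lemma cost_avg (Q : ℕ → ℝ) (hQ : IsCost Q) (C m : ℕ) (hm : m ≤ C) :
    (C : ℝ) * Q m ≤ (m : ℝ) * Q C := by
  obtain ⟨hQ0, hmono, hconv⟩ := hQ
  set d : ℕ → ℝ := fun j => Q (j + 1) - Q j with hd_def
  have hd : Monotone d := by
    apply monotone_nat_of_le_succ
    intro j
    have := hconv (j + 1) (by omega)
    simp only [Nat.add_sub_cancel] at this
    simpa [hd_def] using this
  have Qsum : ∀ k : ℕ, Q k = ∑ j ∈ Finset.range k, d j := by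
    intro k
    rw [Finset.sum_range_sub (fun j => Q j), hQ0, sub_zero]
  rcases Nat.eq_zero_or_pos m with hm0 | hm1
  · subst hm0; simp [hQ0]
  · have h1 : Q m ≤ (m : ℝ) * d (m - 1) := by
      rw [Qsum]
      calc ∑ j ∈ Finset.range m, d j ≤ ∑ j ∈ Finset.range m, d (m - 1) := by
            apply Finset.sum_le_sum
            intro j hj
            exact hd (by simp at hj; omega)
        _ = (m : ℝ) * d (m - 1) := by simp [mul_comm]
    have h2 : ((C : ℝ) - m) * d (m - 1) ≤ Q C - Q m := by
      have : Q C - Q m = ∑ j ∈ Finset.Ico m C, d j := by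
        rw [Qsum C, Qsum m, ← Finset.sum_range_add_sum_Ico d hm]; ring
      rw [this]
      calc ((C : ℝ) - m) * d (m - 1)
          = ∑ _j ∈ Finset.Ico m C, d (m - 1) := by
            rw [Finset.sum_const, Nat.card_Ico, nsmul_eq_mul, Nat.cast_sub hm]
        _ ≤ ∑ j ∈ Finset.Ico m C, d j := by
            apply Finset.sum_le_sum
            intro j hj
            exact hd (by simp at hj; omega)
    have hmC : (m : ℝ) ≤ C := by exact_mod_cast hm
    have hm1' : (1 : ℝ) ≤ m := by exact_mod_cast hm1
    nlinarith [mul_le_mul_of_nonneg_left h2 (by linarith : (0:ℝ) ≤ (m:ℝ)),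
      mul_le_mul_of_nonneg_left h1 (by linarith : (0:ℝ) ≤ (C:ℝ) - m)]

lemma bid_lb (B : ℕ → ℝ) (hB : IsValuation B) (P : ℝ) (xi : ℕ)
    (hmarg : ∀ j : ℕ, 1 ≤ j → j ≤ xi → P ≤ B j - B (j - 1)) :
    ∀ k : ℕ, k ≤ xi → (k : ℝ) * P ≤ B k := by
  intro k
  induction k with
  | zero => intro _; simp [hB.1]
  | succ k ih =>
    intro hk
    have h1 := ih (by omega)
    have h2 := hmarg (k + 1) (by omega) hk
    simp only [Nat.add_sub_cancel] at h2
    push_cast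
    linarith

/-- in a safe-price auction, any outcome reachable under
no-overbidding bids has nonnegative welfare. -/
theorem stmt17 {n : ℕ} (V B : Fin n → ℕ → ℝ)
    (hV : ∀ i, IsValuation (V i)) (hB : ∀ i, IsValuation (B i))
    (Q : ℕ → ℝ) (hQ : IsCost Q)
    (C : ℕ) (hC : 1 ≤ C)
    (hnob : ∀ (i : Fin n) (x : ℕ), B i x ≤ V i x)
    (x : Fin n → ℕ) (hsum : (∑ i, x i) ≤ C)
    (hmarg : ∀ (i : Fin n) (j : ℕ), 1 ≤ j → j ≤ x i → Q C / C ≤ B i j - B i (j - 1)) :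
    0 ≤ (∑ i, V i (x i)) - Q (∑ i, x i) := by
  have hCpos : (0 : ℝ) < C := by exact_mod_cast hC
  set P : ℝ := Q C / C with hP
  have hBV : ∀ i, ((x i : ℝ)) * P ≤ V i (x i) := by
    intro i
    calc ((x i : ℝ)) * P ≤ B i (x i) :=
          bid_lb (B i) (hB i) P (x i) (fun j h1 h2 => hmarg i j h1 h2) (x i) le_rfl
      _ ≤ V i (x i) := hnob i (x i)
  have hsumV : ((∑ i, x i : ℕ) : ℝ) * P ≤ ∑ i, V i (x i) := by
    push_cast
    rw [Finset.sum_mul]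
    exact Finset.sum_le_sum fun i _ => hBV i
  have hQle : Q (∑ i, x i) ≤ ((∑ i, x i : ℕ) : ℝ) * P := by
    have h := cost_avg Q hQ C (∑ i, x i) hsum
    rw [hP, mul_div_assoc', le_div_iff₀ hCpos]
    linarith
  linarith

end
end
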